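/- There exists a P-solvable MAPF instance with two agents a_1 and a_2 that admits a solution consistent with the priority ordering {1 ≺ 2}, but admits no solution consistent with the priority ordering {2 ≺ 1} and no solution consistent with the empty priority ordering; hence prioritized planning with a fixed given priority ordering is incomplete even on the class of P-solvable MAPF instances. -/

import Mathlib

/-- Two (space-time) paths have a vertex collision: same vertex at the same time. -/
def VCol {V : Type} (π σ : ℕ → V) : Prop := ∃ t, π t = σ t

/-- Two (space-time) paths have an edge collision: they traverse the same edge in
opposite directions at the same time. -/
def ECol {V : Type} (π σ : ℕ → V) : Prop := ∃ t, π t = σ (t + 1) ∧ π (t + 1) = σ t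

/-- Two paths collide if they have a vertex collision or an edge collision. -/
def Collide {V : Type} (π σ : ℕ → V) : Prop := VCol π σ ∨ ECol π σ

/-- `π : ℕ → V` is a path from `s` to `t` in `G`: it starts at `s`, at each time step
it stays put or moves along an edge of `G`, and it is eventually always at `t`. -/
def IsPathFun {V : Type} (G : SimpleGraph V) (s t : V) (π : ℕ → V) : Prop :=
  π 0 = s ∧ (∀ n, π (n + 1) = π n ∨ G.Adj (π n) (π (n + 1))) ∧ ∃ T, ∀ n ≥ T, π n = t

/-- The arrival time of a path at a target vertex `tgt`: the least time `T` such that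
the path is at `tgt` at all times `≥ T`. -/
noncomputable def arrivalTime {V : Type} (tgt : V) (π : ℕ → V) : ℕ :=
  sInf {T | ∀ n ≥ T, π n = tgt}

/-- A MAPF instance: a connected undirected graph and `M` agents with pairwise distinct
start vertices and pairwise distinct target vertices. -/
structure MAPF where
  V : Type
  G : SimpleGraph V
  conn : G.Connected
  M : ℕ
  s : Fin M → V
  t : Fin M → V
  s_inj : Function.Injective s
  t_inj : Function.Injective t

/-- `π` is a path for agent `i` of the MAPF instance `P`. -/
def MAPF.IsPath (P : MAPF) (i : Fin P.M) (π : ℕ → P.V) : Prop :=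
  IsPathFun P.G (P.s i) (P.t i) π

/-- The arrival time of agent `i`'s path `π`. -/
noncomputable def MAPF.arr (P : MAPF) (i : Fin P.M) (π : ℕ → P.V) : ℕ :=
  arrivalTime (P.t i) π

/-- A solution: a path for each agent such that no two paths collide. -/
def MAPF.Solution (P : MAPF) (π : Fin P.M → ℕ → P.V) : Prop :=
  (∀ i, P.IsPath i (π i)) ∧ ∀ i j, i ≠ j → ¬ Collide (π i) (π j)

/-- A priority ordering: a strict partial order (irreflexive and transitive relation)
on the agents. -/
def IsPO {M : ℕ} (r : Fin M → Fin M → Prop) : Prop :=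
  (∀ i, ¬ r i i) ∧ ∀ i j k, r i j → r j k → r i k

/-- A total priority ordering: a strict total order on the agents. -/
def IsTotalPO {M : ℕ} (r : Fin M → Fin M → Prop) : Prop :=
  IsPO r ∧ ∀ i j : Fin M, i ≠ j → r i j ∨ r j i

/-- A plan `π` is consistent with a priority ordering `r`: for every agent `i`, the
arrival time of `π i` is the minimum arrival time over all paths for agent `i` that
have no collision with `π j` for every higher-priority agent `j` (`r j i`). -/
def MAPF.Consistent (P : MAPF) (π : Fin P.M → ℕ → P.V)
    (r : Fin P.M → Fin P.M → Prop) : Prop :=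
  ∀ i, IsLeast {T | ∃ σ, P.IsPath i σ ∧ (∀ j, r j i → ¬ Collide σ (π j)) ∧ P.arr i σ = T}
    (P.arr i (π i))

/-- A MAPF instance is P-solvable if it admits a solution consistent with some
priority ordering. -/
def MAPF.PSolvable (P : MAPF) : Prop :=
  ∃ π r, IsPO r ∧ P.Solution π ∧ P.Consistent π r

/-- The flowtime of a plan: the sum of the arrival times of all agents. -/
noncomputable def MAPF.flowtime (P : MAPF) (π : Fin P.M → ℕ → P.V) : ℕ :=
  ∑ i, P.arr i (π i)

/-- The makespan of a plan: the maximum of the arrival times of all agents. -/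
noncomputable def MAPF.makespan (P : MAPF) (π : Fin P.M → ℕ → P.V) : ℕ :=
  Finset.univ.sup fun i => P.arr i (π i)

/-- A MAPF instance is well-formed if every agent has a (finite) walk from its start
vertex to its target vertex that visits neither the start vertex nor the target vertex
of any other agent. -/
def MAPF.WellFormed (P : MAPF) : Prop :=
  ∀ i, ∃ w : P.G.Walk (P.s i) (P.t i),
    ∀ j, j ≠ i → P.s j ∉ w.support ∧ P.t j ∉ w.support

/-!
The instance lives on the path `0 – 1 – 2 – 3` with a pendant vertex `4` at `2`; agent `0`
(the paper's `a₁`) travels `0 → 3` and agent `1` (`a₂`) travels `2 → 1`. Unconstrained, agent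
`1` steps onto vertex `1` at time `1` and stays there; since the leaf `0` can only be left
through `1`, agent `0` is then walled in. So agent `1` cannot plan first, and under the empty
ordering both agents plan as if alone and meet. If agent `0` plans first (`0, 1, 2, 3`), agent
`1` dodges into `4` and reaches `1` at time `4`.
-/

section Arrival

variable {V : Type} {tgt : V} {π : ℕ → V}

lemma arrivalTime_le {T : ℕ} (h : ∀ n ≥ T, π n = tgt) : arrivalTime tgt π ≤ T :=
  Nat.sInf_le h

lemma eq_of_arrivalTime_le (h : ∃ T, ∀ n ≥ T, π n = tgt) {n : ℕ}
    (hn : arrivalTime tgt π ≤ n) : π n = tgt :=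
  Nat.sInf_mem h n hn

lemma lt_arrivalTime_of_ne (h : ∃ T, ∀ n ≥ T, π n = tgt) {n : ℕ} (hn : π n ≠ tgt) :
    n < arrivalTime tgt π :=
  lt_of_not_ge fun hle => hn (eq_of_arrivalTime_le h hle)

lemma arrivalTime_eq_succ {N : ℕ} (h : ∀ n ≥ N + 1, π n = tgt) (hN : π N ≠ tgt) :
    arrivalTime tgt π = N + 1 :=
  (arrivalTime_le h).antisymm (lt_arrivalTime_of_ne ⟨_, h⟩ hN)

end Arrival

lemma Collide.symm {V : Type} {π σ : ℕ → V} (h : Collide π σ) : Collide σ π := by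
  rcases h with ⟨t, ht⟩ | ⟨t, h₁, h₂⟩
  · exact Or.inl ⟨t, ht.symm⟩
  · exact Or.inr ⟨t, h₂.symm, h₁.symm⟩

/-- Once both paths are at rest, a collision after time `N` is already one at time `N`. -/
lemma collide_iff_exists_le {V : Type} {π σ : ℕ → V} {N : ℕ} (hπ : ∀ n ≥ N, π n = π N)
    (hσ : ∀ n ≥ N, σ n = σ N) :
    Collide π σ ↔ ∃ t ≤ N, π t = σ t ∨ (π t = σ (t + 1) ∧ π (t + 1) = σ t) := by
  constructor
  · rintro (⟨t, ht⟩ | ⟨t, ht⟩)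
    · rcases le_or_gt t N with htN | htN
      · exact ⟨t, htN, Or.inl ht⟩
      · exact ⟨N, le_rfl, Or.inl (by rw [← hπ t htN.le, ht, hσ t htN.le])⟩
    · rcases le_or_gt t N with htN | htN
      · exact ⟨t, htN, Or.inr ht⟩
      · exact ⟨N, le_rfl, Or.inl (by rw [← hπ t htN.le, ht.1, hσ (t + 1) (by omega)])⟩
  · rintro ⟨t, -, ht | ht⟩
    · exact Or.inl ⟨t, ht⟩
    · exact Or.inr ⟨t, ht⟩

section PathFun

variable {V : Type} {G : SimpleGraph V} {s t : V} {π : ℕ → V}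

lemma isPathFun_of_forall_ge {N : ℕ} (h₀ : π 0 = s)
    (hstep : ∀ n < N, π (n + 1) = π n ∨ G.Adj (π n) (π (n + 1)))
    (hrest : ∀ n ≥ N, π n = t) : IsPathFun G s t π := by
  refine ⟨h₀, fun n => ?_, N, hrest⟩
  rcases lt_or_ge n N with hn | hn
  · exact hstep n hn
  · exact Or.inl (by rw [hrest n hn, hrest (n + 1) (by omega)])

lemma IsPathFun.exists_adj_start (hπ : IsPathFun G s t π) (hst : s ≠ t) :
    ∃ n, π n = s ∧ G.Adj s (π (n + 1)) := by
  classical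
  obtain ⟨h₀, hstep, T, hT⟩ := hπ
  have hleave : ∃ n, π n ≠ s := ⟨T, by rw [hT T le_rfl]; exact hst.symm⟩
  obtain ⟨k, hk⟩ : ∃ k, Nat.find hleave = k + 1 :=
    Nat.exists_eq_succ_of_ne_zero fun h => Nat.find_spec hleave (by rw [h, h₀])
  have hstay : π k = s := not_not.mp (Nat.find_min hleave (by omega))
  have hmove : π (k + 1) ≠ s := hk ▸ Nat.find_spec hleave
  refine ⟨k, hstay, ?_⟩
  rcases hstep k with h | h
  · exact absurd (h.trans hstay) hmove
  · rwa [hstay] at h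

end PathFun

lemma MAPF.arr_le_of_consistent {P : MAPF} {π : Fin P.M → ℕ → P.V}
    {r : Fin P.M → Fin P.M → Prop} (hπ : P.Consistent π r) {i : Fin P.M}
    (hi : ∀ j, ¬ r j i) {σ : ℕ → P.V} (hσ : P.IsPath i σ) : P.arr i (π i) ≤ P.arr i σ :=
  (hπ i).2 ⟨σ, hσ, fun j hj => (hi j hj).elim, rfl⟩

def forkGraph : SimpleGraph (Fin 5) :=
  SimpleGraph.fromRel fun a b =>
    (a, b) ∈ ({(0, 1), (1, 2), (2, 3), (2, 4)} : Finset (Fin 5 × Fin 5))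

instance : DecidableRel forkGraph.Adj := fun _ _ => inferInstanceAs (Decidable (_ ∧ _))

abbrev forkMAPF : MAPF where
  V := Fin 5
  G := forkGraph
  conn := by decide
  M := 2
  s := ![0, 2]
  t := ![3, 1]
  s_inj := by decide
  t_inj := by decide

def leadPlan : ℕ → Fin 5
  | 0 => 0
  | 1 => 1
  | 2 => 2
  | _ => 3

def detourPlan : ℕ → Fin 5
  | 0 => 2
  | 1 => 4
  | 2 => 4
  | 3 => 2
  | _ => 1

def directPlan : ℕ → Fin 5
  | 0 => 2
  | _ => 1

lemma leadPlan_of_ge {n : ℕ} (hn : 3 ≤ n) : leadPlan n = 3 := by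
  obtain ⟨k, rfl⟩ := Nat.exists_eq_add_of_le' hn
  rfl

lemma detourPlan_of_ge {n : ℕ} (hn : 4 ≤ n) : detourPlan n = 1 := by
  obtain ⟨k, rfl⟩ := Nat.exists_eq_add_of_le' hn
  rfl

lemma directPlan_of_ge {n : ℕ} (hn : 1 ≤ n) : directPlan n = 1 := by
  obtain ⟨k, rfl⟩ := Nat.exists_eq_add_of_le' hn
  rfl

lemma isPathFun_leadPlan : IsPathFun forkGraph 0 3 leadPlan :=
  isPathFun_of_forall_ge rfl (by decide) fun _ => leadPlan_of_ge

lemma isPathFun_detourPlan : IsPathFun forkGraph 2 1 detourPlan :=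
  isPathFun_of_forall_ge rfl (by decide) fun _ => detourPlan_of_ge

lemma isPathFun_directPlan : IsPathFun forkGraph 2 1 directPlan :=
  isPathFun_of_forall_ge rfl (by decide) fun _ => directPlan_of_ge

lemma arrivalTime_leadPlan : arrivalTime 3 leadPlan = 3 :=
  arrivalTime_eq_succ (fun _ => leadPlan_of_ge) (by decide)

lemma arrivalTime_detourPlan : arrivalTime 1 detourPlan = 4 :=
  arrivalTime_eq_succ (fun _ => detourPlan_of_ge) (by decide)

lemma arrivalTime_directPlan : arrivalTime 1 directPlan = 1 :=
  arrivalTime_eq_succ (fun _ => directPlan_of_ge) (by decide)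

lemma not_collide_leadPlan_detourPlan : ¬ Collide leadPlan detourPlan := by
  rw [collide_iff_exists_le (N := 4) (fun _ hn => leadPlan_of_ge (by omega))
    fun _ => detourPlan_of_ge]
  decide

lemma forkGraph_three_le_arrivalTime {σ : ℕ → Fin 5} (hσ : IsPathFun forkGraph 0 3 σ) :
    3 ≤ arrivalTime 3 σ := by
  obtain ⟨h₀, hstep, hrest⟩ := hσ
  have hfar : ∀ b c : Fin 5, (b = 0 ∨ forkGraph.Adj 0 b) → (c = b ∨ forkGraph.Adj b c) →
      c ≠ 3 := by decide
  exact lt_arrivalTime_of_ne hrest (hfar _ _ (h₀ ▸ hstep 0) (hstep 1))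

set_option synthInstance.maxSize 512 in
lemma forkGraph_four_le_arrivalTime {σ : ℕ → Fin 5} (hσ : IsPathFun forkGraph 2 1 σ)
    (hfree : ¬ Collide σ leadPlan) : 4 ≤ arrivalTime 1 σ := by
  obtain ⟨h₀, hstep, hrest⟩ := hσ
  have hblocked : ∀ a b c : Fin 5, (a = 2 ∨ forkGraph.Adj 2 a) → (b = a ∨ forkGraph.Adj a b) →
      (c = b ∨ forkGraph.Adj b c) → a ≠ 1 → b ≠ 2 → ¬ (a = 2 ∧ b = 1) → c ≠ 1 := by decide
  exact lt_arrivalTime_of_ne hrest <| hblocked _ _ _ (h₀ ▸ hstep 0) (hstep 1) (hstep 2)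
    (fun h => hfree (Or.inl ⟨1, h⟩)) (fun h => hfree (Or.inl ⟨2, h⟩))
    (fun h => hfree (Or.inr ⟨1, h⟩))

/-- Vertex `0` is a leaf behind vertex `1`, so agent `0` cannot get past an agent parked on `1`. -/
lemma forkGraph_collide_of_parked {σ τ : ℕ → Fin 5} (hσ : IsPathFun forkGraph 0 3 σ)
    (hτ : ∀ n ≥ 1, τ n = 1) : Collide σ τ := by
  obtain ⟨n, -, hadj⟩ := hσ.exists_adj_start (by decide)
  have hleaf : ∀ v, forkGraph.Adj 0 v → v = 1 := by decide
  exact Or.inl ⟨n + 1, by rw [hleaf _ hadj, hτ (n + 1) (by omega)]⟩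

lemma forkMAPF_parked_of_unconstrained {π : Fin 2 → ℕ → Fin 5} {r : Fin 2 → Fin 2 → Prop}
    (hsol : forkMAPF.Solution π) (hπ : forkMAPF.Consistent π r) (h1 : ∀ j, ¬ r j 1) :
    ∀ n ≥ 1, π 1 n = 1 := by
  have hpath : IsPathFun forkGraph 2 1 (π 1) := hsol.1 1
  have harr : arrivalTime 1 (π 1) ≤ 1 :=
    (MAPF.arr_le_of_consistent hπ h1 isPathFun_directPlan).trans_eq arrivalTime_directPlan
  exact fun n hn => eq_of_arrivalTime_le hpath.2.2 (harr.trans hn)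

def forkPlan : Fin 2 → ℕ → Fin 5 := ![leadPlan, detourPlan]

lemma forkMAPF_solution_forkPlan : forkMAPF.Solution forkPlan := by
  refine ⟨fun i => ?_, fun i j hij => ?_⟩
  · fin_cases i
    exacts [isPathFun_leadPlan, isPathFun_detourPlan]
  · fin_cases i <;> fin_cases j
    all_goals first
      | exact absurd rfl hij
      | exact not_collide_leadPlan_detourPlan
      | exact fun h => not_collide_leadPlan_detourPlan h.symm

lemma forkMAPF_consistent_forkPlan :
    forkMAPF.Consistent forkPlan (fun i j => i.1 = 0 ∧ j.1 = 1) := by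
  intro i
  fin_cases i
  · refine ⟨⟨leadPlan, isPathFun_leadPlan, fun j hj => absurd hj.2 (by decide), rfl⟩, ?_⟩
    rintro _ ⟨σ, hσ, -, rfl⟩
    exact arrivalTime_leadPlan.trans_le (forkGraph_three_le_arrivalTime hσ)
  · refine ⟨⟨detourPlan, isPathFun_detourPlan, fun j hj => ?_, rfl⟩, ?_⟩
    · obtain rfl : j = 0 := Fin.ext hj.1
      exact fun h => not_collide_leadPlan_detourPlan h.symm
    · rintro _ ⟨σ, hσ, hfree, rfl⟩
      exact arrivalTime_detourPlan.trans_le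
        (forkGraph_four_le_arrivalTime hσ (hfree 0 ⟨rfl, rfl⟩))

/-- There exists a P-solvable MAPF instance with two agents that admits a solution
consistent with the priority ordering `{1 ≺ 2}`, but no solution consistent with
`{2 ≺ 1}` and no solution consistent with the empty priority ordering. -/
theorem stmt1 :
    ∃ P : MAPF, P.M = 2 ∧
      (∃ π, P.Solution π ∧ P.Consistent π (fun i j => i.1 = 0 ∧ j.1 = 1)) ∧
      (¬ ∃ π, P.Solution π ∧ P.Consistent π (fun i j => i.1 = 1 ∧ j.1 = 0)) ∧
      (¬ ∃ π, P.Solution π ∧ P.Consistent π (fun _ _ => False)) := by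
  refine ⟨forkMAPF, rfl, ⟨forkPlan, forkMAPF_solution_forkPlan, forkMAPF_consistent_forkPlan⟩,
    ?_, ?_⟩
  · rintro ⟨π, hsol, hπ⟩
    obtain ⟨σ, hσ, hfree, -⟩ := (hπ 0).1
    exact hfree 1 ⟨rfl, rfl⟩ <| forkGraph_collide_of_parked hσ <|
      forkMAPF_parked_of_unconstrained hsol hπ fun _ hj => absurd hj.2 (by decide)
  · rintro ⟨π, hsol, hπ⟩
    exact hsol.2 0 1 (by decide) <| forkGraph_collide_of_parked (hsol.1 0) <|
      forkMAPF_parked_of_unconstrained hsol hπ fun _ => id
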